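/- Let n < r be positive integers and v₁,…,v_r ∈ ℤⁿ with v_i = e_i for 1 ≤ i ≤ n and v₁+⋯+v_r = 0. Let a ∈ ℤ^r with a_j = 0 for 1 ≤ j ≤ n and P(a)∩ℤⁿ ≠ ∅, and let w ∈ P(a)∩ℤⁿ be a point maximizing the coordinate sum u₁+⋯+uₙ over P(a)∩ℤⁿ. Then (d/dx₁)_q^{w₁} ∘ ⋯ ∘ (d/dxₙ)_q^{wₙ} applied to RS_a(x;q) is a nonzero constant, i.e. a nonzero element of ℚ(q). -/

import Mathlib

noncomputable section
open MvPolynomial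

/-- `(q;q)_d = ∏_{k=1}^d (1 - q^k)` in `ℚ(q)`. -/
def qqPoch (q : RatFunc ℚ) (d : ℕ) : RatFunc ℚ :=
  ∏ k ∈ Finset.range d, (1 - q ^ (k + 1))

/-- The substitution operator `T_{i,q} : f(x₁,…,x_i,…,xₙ) ↦ f(x₁,…,q·x_i,…,xₙ)`. -/
def Tq {n : ℕ} (i : Fin n) (f : MvPolynomial (Fin n) (RatFunc ℚ)) :
    MvPolynomial (Fin n) (RatFunc ℚ) :=
  aeval (fun j : Fin n => if j = i then C RatFunc.X * X j else X j) f

/-- The `i`-th Jackson (partial `q`-)derivative `(d/dx_i)_q f = (f − T_{i,q} f)/((1−q)x_i)`;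
the numerator `f − T_{i,q} f` is exactly divisible by the monomial `x_i`. -/
def jackson {n : ℕ} (i : Fin n) (f : MvPolynomial (Fin n) (RatFunc ℚ)) :
    MvPolynomial (Fin n) (RatFunc ℚ) :=
  C (1 - RatFunc.X : RatFunc ℚ)⁻¹ * ((f - Tq i f).divMonomial (Finsupp.single i 1))

/-- The generalized Rogers–Szegő polynomial
`RS_a(x;q) = Σ_{u ∈ P(a)∩ℤⁿ} [|a|; ⟨u,v₁⟩+a₁,…,⟨u,v_r⟩+a_r]_q x₁^{u₁}⋯xₙ^{uₙ}`,
where `P(a) = {u ∈ ℝⁿ : ⟨u,v_i⟩ ≥ −a_i for all i}` lies in the nonnegative orthant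
(so its lattice points are indexed by `u : Fin n → ℕ`); the sum is a finite sum
(`∑ᶠ`, a finitely supported sum), equal to `0` if `P(a)∩ℤⁿ = ∅`. -/
def RSgen (n r : ℕ) (v : Fin r → Fin n → ℤ) (a : Fin r → ℤ) :
    MvPolynomial (Fin n) (RatFunc ℚ) :=
  ∑ᶠ u : Fin n → ℕ,
    if ∀ i, -(a i) ≤ ∑ j, (u j : ℤ) * v i j then
      monomial (Finsupp.equivFunOnFinite.symm u)
        (qqPoch RatFunc.X (∑ i, a i).toNat /
          ∏ i, qqPoch RatFunc.X ((∑ j, (u j : ℤ) * v i j) + a i).toNat)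
    else 0

end

/-! A Jackson derivative sends a monomial to a scalar multiple of a monomial, so
`(d/dx₁)_q^{w₁} ∘ ⋯ ∘ (d/dxₙ)_q^{wₙ}` sends `x^u` to `[u]_q^{(w)} x^{u-w}`, where the
`q`-falling factorial `[u]_q^{(w)}` vanishes unless `w ≤ u` componentwise. A lattice point
`u ≠ w` of `P(a)` with `w ≤ u` would have a larger coordinate sum than `w`, so only the term
`u = w` of `RS_a` survives, and it becomes the constant `∏ᵢ [wᵢ]_q! · [|a|; …]_q ≠ 0`. -/

open MvPolynomial Finset

theorem AddMonoid.End.list_ofFn_prod_apply {M : Type*} [AddMonoid M] {m : ℕ}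
    (F : Fin m → AddMonoid.End M) (x : M) :
    (List.ofFn F).prod x = Fin.foldr m (fun i => F i) x := by
  induction m with
  | zero => rfl
  | succ m ih =>
    rw [List.ofFn_succ, List.prod_cons, AddMonoid.End.coe_mul, Function.comp_apply, ih,
      Fin.foldr_succ]

theorem exists_lt_of_sum_le_of_ne {ι : Type*} [Fintype ι] {u w : ι → ℕ}
    (hle : ∑ i, u i ≤ ∑ i, w i) (hne : u ≠ w) : ∃ i, u i < w i := by
  by_contra! hwu
  have hsum : ∑ i, w i = ∑ i, u i := le_antisymm (sum_le_sum fun i _ => hwu i) hle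
  exact hne (funext fun i => ((sum_eq_sum_iff_of_le fun i _ => hwu i).mp hsum i (mem_univ i)).symm)

theorem RatFunc.one_sub_X_pow_ne_zero {K : Type*} [Field K] {m : ℕ} (hm : m ≠ 0) :
    (1 - RatFunc.X ^ m : RatFunc K) ≠ 0 := by
  have hcast : (1 - RatFunc.X ^ m : RatFunc K) =
      algebraMap (Polynomial K) (RatFunc K) (1 - Polynomial.X ^ m) := by
    simp [RatFunc.algebraMap_X]
  rw [hcast, ne_eq, map_eq_zero_iff _ (RatFunc.algebraMap_injective K)]
  intro h
  simpa [Polynomial.coeff_one, hm] using congrArg (Polynomial.coeff · m) h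

theorem qqPoch_X_ne_zero (d : ℕ) : qqPoch RatFunc.X d ≠ 0 :=
  prod_ne_zero_iff.mpr fun k _ => RatFunc.one_sub_X_pow_ne_zero k.succ_ne_zero

noncomputable def qInt (m : ℕ) : RatFunc ℚ :=
  (1 - RatFunc.X ^ m) / (1 - RatFunc.X)

theorem qInt_zero : qInt 0 = 0 := by
  simp [qInt]

theorem qInt_ne_zero {m : ℕ} (hm : m ≠ 0) : qInt m ≠ 0 :=
  div_ne_zero (RatFunc.one_sub_X_pow_ne_zero hm)
    (by simpa using RatFunc.one_sub_X_pow_ne_zero one_ne_zero)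

noncomputable def qDescFactorial (m k : ℕ) : RatFunc ℚ :=
  ∏ t ∈ range k, qInt (m - t)

theorem qDescFactorial_eq_zero_of_lt {m k : ℕ} (h : m < k) : qDescFactorial m k = 0 :=
  prod_eq_zero (mem_range.mpr h) (by rw [Nat.sub_self, qInt_zero])

theorem qDescFactorial_ne_zero {m k : ℕ} (h : k ≤ m) : qDescFactorial m k ≠ 0 :=
  prod_ne_zero_iff.mpr fun t ht => qInt_ne_zero (by have := mem_range.mp ht; omega)

section Jackson

variable {n : ℕ}

theorem Tq_monomial (i : Fin n) (d : Fin n →₀ ℕ) (c : RatFunc ℚ) :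
    Tq i (monomial d c) = monomial d (RatFunc.X ^ d i * c) := by
  rw [Tq, aeval_monomial, Finsupp.prod_fintype _ _ (by simp), monomial_eq,
    Finsupp.prod_fintype _ _ (by simp)]
  have hfactor : ∀ j, (if j = i then C RatFunc.X * X j else X j) ^ d j =
      (if j = i then C (RatFunc.X ^ d i) else 1) *
        (X j : MvPolynomial (Fin n) (RatFunc ℚ)) ^ d j := by
    intro j
    split_ifs with h <;> simp [h, mul_pow]
  simp only [hfactor, prod_mul_distrib, prod_ite_eq', mem_univ, if_true, algebraMap_eq, C_mul]
  ring

theorem jackson_monomial (i : Fin n) (d : Fin n →₀ ℕ) (c : RatFunc ℚ) :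
    jackson i (monomial d c) = monomial (d - Finsupp.single i 1) (qInt (d i) * c) := by
  rw [jackson, Tq_monomial, ← map_sub]
  rcases Nat.eq_zero_or_pos (d i) with h | h
  · simp [h, qInt_zero]
  · have hsplit : monomial d (c - RatFunc.X ^ d i * c) =
        monomial (d - Finsupp.single i 1) (c - RatFunc.X ^ d i * c) *
          (monomial (Finsupp.single i 1) 1 : MvPolynomial (Fin n) (RatFunc ℚ)) := by
      rw [monomial_mul, mul_one, tsub_add_cancel_of_le (Finsupp.single_le_iff.mpr h)]
    rw [hsplit, divMonomial_mul_monomial, C_mul_monomial, qInt, div_eq_inv_mul]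
    ring_nf

noncomputable def jacksonEnd (i : Fin n) : AddMonoid.End (MvPolynomial (Fin n) (RatFunc ℚ)) where
  toFun := jackson i
  map_zero' := by simp [jackson, Tq]
  map_add' f g := by
    simp only [jackson, Tq, map_add, add_sub_add_comm, add_divMonomial, mul_add]

theorem jacksonEnd_pow_monomial (i : Fin n) (k : ℕ) (d : Fin n →₀ ℕ) (c : RatFunc ℚ) :
    (jacksonEnd i ^ k) (monomial d c) =
      monomial (d - Finsupp.single i k) (qDescFactorial (d i) k * c) := by
  induction k with
  | zero => simp [qDescFactorial]
  | succ k ih =>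
    rw [pow_succ', AddMonoid.End.coe_mul, Function.comp_apply, ih]
    change jackson i _ = _
    rw [jackson_monomial, tsub_tsub, ← Finsupp.single_add, Finsupp.tsub_apply,
      Finsupp.single_eq_same, qDescFactorial, qDescFactorial, prod_range_succ]
    ring_nf

theorem list_ofFn_prod_jacksonEnd_pow_monomial {m : ℕ} (idx : Fin m → Fin n)
    (hidx : Function.Injective idx) (k : Fin m → ℕ) (d : Fin n →₀ ℕ) (c : RatFunc ℚ) :
    (List.ofFn fun j => jacksonEnd (idx j) ^ k j).prod (monomial d c) =
      monomial (d - ∑ j, Finsupp.single (idx j) (k j))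
        ((∏ j, qDescFactorial (d (idx j)) (k j)) * c) := by
  induction m with
  | zero => simp
  | succ m ih =>
    rw [List.ofFn_succ, List.prod_cons, AddMonoid.End.coe_mul, Function.comp_apply,
      ih (fun j => idx j.succ) (hidx.comp (Fin.succ_injective m)), jacksonEnd_pow_monomial,
      tsub_tsub, Fin.sum_univ_succ, Fin.prod_univ_succ, add_comm]
    have hfirst : (∑ j : Fin m, Finsupp.single (idx j.succ) (k j.succ)) (idx 0) = 0 := by
      simp [Finsupp.finsetSum_apply, hidx.eq_iff, Fin.succ_ne_zero]
    simp only [Finsupp.tsub_apply, hfirst, Nat.sub_zero, mul_assoc]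

noncomputable def jacksonFold (w : Fin n → ℕ) :
    AddMonoid.End (MvPolynomial (Fin n) (RatFunc ℚ)) :=
  (List.ofFn fun i => jacksonEnd i ^ w i).prod

theorem jacksonFold_apply (w : Fin n → ℕ) (f : MvPolynomial (Fin n) (RatFunc ℚ)) :
    jacksonFold w f = Fin.foldr n (fun i f => (jackson i)^[w i] f) f :=
  AddMonoid.End.list_ofFn_prod_apply _ f

theorem jacksonFold_monomial (w : Fin n → ℕ) (d : Fin n →₀ ℕ) (c : RatFunc ℚ) :
    jacksonFold w (monomial d c) =
      monomial (d - Finsupp.equivFunOnFinite.symm w) ((∏ i, qDescFactorial (d i) (w i)) * c) := by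
  refine (list_ofFn_prod_jacksonEnd_pow_monomial id Function.injective_id w d c).trans ?_
  congr 2
  ext j
  simp [Finsupp.single_apply]

theorem jacksonFold_finsum_of_sum_le (P : (Fin n → ℕ) → Prop) [DecidablePred P]
    (c : (Fin n → ℕ) → RatFunc ℚ) (w : Fin n → ℕ) (hw : P w)
    (hmax : ∀ u, P u → ∑ j, u j ≤ ∑ j, w j) :
    jacksonFold w (∑ᶠ u, if P u then monomial (Finsupp.equivFunOnFinite.symm u) (c u) else 0) =
      C ((∏ i, qDescFactorial (w i) (w i)) * c w) := by
  have hfin : (Function.support fun u =>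
      if P u then monomial (Finsupp.equivFunOnFinite.symm u) (c u) else 0).Finite := by
    refine (Set.finite_Iic fun _ => ∑ j, w j).subset fun u hu => ?_
    have hPu : P u := by_contra fun h => hu (if_neg h)
    exact fun j => (single_le_sum (fun _ _ => Nat.zero_le _) (mem_univ j)).trans (hmax u hPu)
  rw [map_finsum _ hfin, finsum_eq_single _ w]
  · rw [if_pos hw, jacksonFold_monomial, tsub_self, monomial_zero']
    rfl
  · intro u hne
    split_ifs with hPu
    · obtain ⟨i, hi⟩ := exists_lt_of_sum_le_of_ne (hmax u hPu) hne
      rw [jacksonFold_monomial, prod_eq_zero (mem_univ i) (qDescFactorial_eq_zero_of_lt hi),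
        zero_mul, monomial_zero]
    · exact map_zero _

end Jackson

theorem stmt7_general (n r : ℕ) (v : Fin r → Fin n → ℤ) (a : Fin r → ℤ) (w : Fin n → ℕ)
    (hwP : ∀ i, -(a i) ≤ ∑ j, (w j : ℤ) * v i j)
    (hwmax : ∀ u : Fin n → ℕ, (∀ i, -(a i) ≤ ∑ j, (u j : ℤ) * v i j) → ∑ j, u j ≤ ∑ j, w j) :
    ∃ c : RatFunc ℚ, c ≠ 0 ∧
      Fin.foldr n (fun i f => (jackson i)^[w i] f) (RSgen n r v a) = MvPolynomial.C c := by
  refine ⟨_, ?_,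
    (jacksonFold_apply w _).symm.trans (jacksonFold_finsum_of_sum_le _ _ w hwP hwmax)⟩
  exact mul_ne_zero (prod_ne_zero_iff.mpr fun i _ => qDescFactorial_ne_zero le_rfl)
    (div_ne_zero (qqPoch_X_ne_zero _) (prod_ne_zero_iff.mpr fun i _ => qqPoch_X_ne_zero _))

/-- With `w` a lattice point of `P(a)` maximizing the coordinate sum,
`(d/dx₁)_q^{w₁} ∘ ⋯ ∘ (d/dxₙ)_q^{wₙ}` applied to `RS_a(x;q)` is a nonzero constant. -/
theorem stmt7 (n r : ℕ) (hn : 0 < n) (hnr : n < r) (v : Fin r → Fin n → ℤ)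
    (hv : ∀ i : Fin r, (i : ℕ) < n → ∀ j : Fin n, v i j = if (j : ℕ) = (i : ℕ) then 1 else 0)
    (hsym : ∀ j, ∑ i, v i j = 0)
    (a : Fin r → ℤ) (ha : ∀ i : Fin r, (i : ℕ) < n → a i = 0)
    (w : Fin n → ℕ)
    (hwP : ∀ i, -(a i) ≤ ∑ j, (w j : ℤ) * v i j)
    (hwmax : ∀ u : Fin n → ℕ, (∀ i, -(a i) ≤ ∑ j, (u j : ℤ) * v i j) → ∑ j, u j ≤ ∑ j, w j) :
    ∃ c : RatFunc ℚ, c ≠ 0 ∧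
      Fin.foldr n (fun i f => (jackson i)^[w i] f) (RSgen n r v a) = MvPolynomial.C c :=
  stmt7_general n r v a w hwP hwmax
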